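/- Let μ ∈ ℝ, σ > 0 and β ≥ 0. Then ∫₀^∞ u₁(x) · f_{μ,σ}(x)^{1+β} dx = −βσ(1+β) · L(β,μ,σ). -/

import Mathlib

/-!
Under the substitution `x = exp y` the log-normal density becomes Gaussian in `y`:
`exp y * u₁(exp y) * f(exp y) ^ (1 + β)` is a constant multiple of
`(y - μ) * exp (-a (y - μ)² - β (y - μ))` with `a = (1 + β) / (2σ²)`. Completing the square, the
integral of the latter is the mean `-β / (2a) = -βσ² / (1 + β)` of a Gaussian times its total mass,
and collecting the constants gives `-βσ(1 + β) L(β, μ, σ)`.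
-/

open Real MeasureTheory Set

/-- The log-normal density with parameters `μ` and `σ`. -/
noncomputable def lognormalPdf (μ σ : ℝ) (x : ℝ) : ℝ :=
  if 0 < x then
    (1 / (x * σ * Real.sqrt (2 * Real.pi))) * Real.exp (-(Real.log x - μ) ^ 2 / (2 * σ ^ 2))
  else 0

/-- First component of the score function of the log-normal model. -/
noncomputable def scoreU1 (μ σ : ℝ) (x : ℝ) : ℝ := (Real.log x - μ) / σ ^ 2

/-- Second component of the score function of the log-normal model. -/
noncomputable def scoreU2 (μ σ : ℝ) (x : ℝ) : ℝ := ((Real.log x - μ) ^ 2 - σ ^ 2) / σ ^ 3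

/-- The common multiplicative factor `L(β, μ, σ)`. -/
noncomputable def Lfactor (β μ σ : ℝ) : ℝ :=
  Real.exp (-β * μ + β ^ 2 * σ ^ 2 / (2 * (1 + β))) /
    (σ ^ (1 + β) * (2 * Real.pi) ^ (β / 2) * (1 + β) ^ ((5 : ℝ) / 2))

theorem integral_Ioi_zero_eq_integral_exp_smul_comp_exp {E : Type*} [NormedAddCommGroup E]
    [NormedSpace ℝ E] (g : ℝ → E) : ∫ x in Ioi 0, g x = ∫ y, exp y • g (exp y) := by
  rw [← range_exp, ← image_univ, integral_image_eq_integral_abs_deriv_smul MeasurableSet.univ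
    (fun y _ ↦ (hasDerivAt_exp y).hasDerivWithinAt) exp_injective.injOn g, Measure.restrict_univ]
  simp_rw [abs_of_pos (exp_pos _)]

theorem integral_mul_exp_neg_mul_sq_eq_zero (a : ℝ) : ∫ y : ℝ, y * exp (-a * y ^ 2) = 0 := by
  have h := integral_neg_eq_self (fun y : ℝ ↦ y * exp (-a * y ^ 2)) volume
  simp only [neg_sq, neg_mul, integral_neg] at h ⊢
  linarith

theorem integral_mul_exp_neg_mul_sq_add_mul {a : ℝ} (ha : 0 < a) (b : ℝ) :
    ∫ y : ℝ, y * exp (-a * y ^ 2 + b * y) = b / (2 * a) * √(π / a) * exp (b ^ 2 / (4 * a)) := by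
  set m := b / (2 * a)
  have hsq (y : ℝ) : -a * y ^ 2 + b * y = -a * (y - m) ^ 2 + b ^ 2 / (4 * a) := by
    simp only [m]; field_simp; ring
  have hcentered : ∫ y : ℝ, (y + m) * exp (-a * y ^ 2) = m * √(π / a) := by
    simp_rw [add_mul]
    rw [integral_add (integrable_mul_exp_neg_mul_sq ha)
        ((integrable_exp_neg_mul_sq ha).const_mul m), integral_mul_exp_neg_mul_sq_eq_zero,
      integral_const_mul, integral_gaussian, zero_add]
  calc ∫ y : ℝ, y * exp (-a * y ^ 2 + b * y)
      = (∫ y : ℝ, y * exp (-a * (y - m) ^ 2)) * exp (b ^ 2 / (4 * a)) := by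
        simp_rw [hsq, exp_add, ← mul_assoc]; exact integral_mul_const _ _
    _ = m * √(π / a) * exp (b ^ 2 / (4 * a)) := by
        rw [← integral_add_right_eq_self _ m, ← hcentered]; simp

theorem lognormalPdf_exp (μ σ y : ℝ) :
    lognormalPdf μ σ (exp y) = exp (-y - (y - μ) ^ 2 / (2 * σ ^ 2)) / (σ * √(2 * π)) := by
  rw [lognormalPdf, if_pos (exp_pos y), log_exp, sub_eq_add_neg (-y), exp_add, exp_neg, ← neg_div]
  field_simp

theorem exp_mul_scoreU1_mul_lognormalPdf_exp_rpow (μ β y : ℝ) {σ : ℝ} (hσ : 0 < σ) :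
    exp y * (scoreU1 μ σ (exp y) * lognormalPdf μ σ (exp y) ^ (1 + β)) =
      exp (-β * μ) / (σ ^ 2 * (σ * √(2 * π)) ^ (1 + β)) *
        ((y - μ) * exp (-((1 + β) / (2 * σ ^ 2)) * (y - μ) ^ 2 + -β * (y - μ))) := by
  have hexp : exp y * exp ((-y - (y - μ) ^ 2 / (2 * σ ^ 2)) * (1 + β))
      = exp (-β * μ) * exp (-((1 + β) / (2 * σ ^ 2)) * (y - μ) ^ 2 + -β * (y - μ)) := by
    rw [← exp_add, ← exp_add]; congr 1; field_simp; ring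
  rw [lognormalPdf_exp, div_rpow (exp_pos _).le (by positivity), ← exp_mul, scoreU1, log_exp]
  linear_combination (y - μ) / (σ ^ 2 * (σ * √(2 * π)) ^ (1 + β)) * hexp

theorem mul_gaussian_first_moment_eq_neg_mul_Lfactor (μ β : ℝ) {σ : ℝ} (hσ : 0 < σ)
    (hβ : 0 < 1 + β) :
    exp (-β * μ) / (σ ^ 2 * (σ * √(2 * π)) ^ (1 + β)) *
        (-β / (2 * ((1 + β) / (2 * σ ^ 2))) * √(π / ((1 + β) / (2 * σ ^ 2))) *
          exp ((-β) ^ 2 / (4 * ((1 + β) / (2 * σ ^ 2))))) =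
      -β * σ * (1 + β) * Lfactor β μ σ := by
  have hsqrt : √(π / ((1 + β) / (2 * σ ^ 2))) = σ * √(2 * π) / √(1 + β) := by
    rw [show π / ((1 + β) / (2 * σ ^ 2)) = σ ^ 2 * (2 * π) / (1 + β) by field_simp,
      sqrt_div' _ hβ.le, sqrt_mul (sq_nonneg σ), sqrt_sq hσ.le]
  have hpow : (σ * √(2 * π)) ^ (1 + β) = σ ^ (1 + β) * (2 * π) ^ (β / 2) * √(2 * π) := by
    rw [mul_rpow hσ.le (sqrt_nonneg _), rpow_add (sqrt_pos.2 (by positivity)), rpow_one,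
      sqrt_eq_rpow, ← rpow_mul (by positivity), one_div_mul_eq_div]
    ring
  have hpow' : (1 + β) ^ ((5 : ℝ) / 2) = (1 + β) ^ 2 * √(1 + β) := by
    rw [show (5 : ℝ) / 2 = 2 + 1 / 2 by norm_num, rpow_add hβ, ← sqrt_eq_rpow, rpow_two]
  have hexp : (-β) ^ 2 / (4 * ((1 + β) / (2 * σ ^ 2))) = β ^ 2 * σ ^ 2 / (2 * (1 + β)) := by
    field_simp; ring
  have hsqrt_pos : 0 < √(1 + β) := sqrt_pos.2 hβ
  rw [hsqrt, hpow, hexp, Lfactor, hpow', exp_add]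
  field_simp

/-- First component of `ξ(μ,σ)`: the integral of `u₁ · f^{1+β}` over `(0,∞)`. -/
theorem xi_first_component (μ σ β : ℝ) (hσ : 0 < σ) (hβ : 0 ≤ β) :
    ∫ x in Ioi (0 : ℝ), scoreU1 μ σ x * lognormalPdf μ σ x ^ (1 + β) =
      -β * σ * (1 + β) * Lfactor β μ σ := by
  have h1β : 0 < 1 + β := by linarith
  have ha : 0 < (1 + β) / (2 * σ ^ 2) := by positivity
  rw [integral_Ioi_zero_eq_integral_exp_smul_comp_exp]
  simp_rw [smul_eq_mul, exp_mul_scoreU1_mul_lognormalPdf_exp_rpow μ β _ hσ]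
  rw [integral_const_mul, integral_sub_right_eq_self
      (fun y ↦ y * exp (-((1 + β) / (2 * σ ^ 2)) * y ^ 2 + -β * y)) μ,
    integral_mul_exp_neg_mul_sq_add_mul ha,
    mul_gaussian_first_moment_eq_neg_mul_Lfactor μ β hσ h1β]
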